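/- Let δ be an ordinal, B ⊆ δ^ω and p ∈ δ^{<ω}. Then it is not the case that B ∩ σ^ω is meager below p for a stationary set of σ ∈ [δ]^ω and B ∩ σ^ω is comeager below p for club many σ ∈ [δ]^ω. -/

import Mathlib

open Set

/-- The basic open set of sequences extending `p`. -/
def Np {κ : Type*} (p : List κ) : Set (ℕ → κ) :=
  {x | ∀ i : Fin p.length, x i.1 = p.get i}

/-- The subspace `σ^ω`. -/
abbrev SeqIn {κ : Type*} (σ : Set κ) : Type _ := {x : ℕ → κ // ∀ n, x n ∈ σ}

/-- `B ∩ σ^ω` is meager below `p` in the space `σ^ω`. -/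
def MeagerBelowIn {κ : Type*} [TopologicalSpace κ] (σ : Set κ) (B : Set (ℕ → κ))
    (p : List κ) : Prop :=
  IsMeagre (Subtype.val ⁻¹' (B ∩ Np p) : Set (SeqIn σ))

/-- `B ∩ σ^ω` is comeager below `p` in the space `σ^ω`. -/
def ComeagerBelowIn {κ : Type*} [TopologicalSpace κ] (σ : Set κ) (B : Set (ℕ → κ))
    (p : List κ) : Prop :=
  IsMeagre (Subtype.val ⁻¹' (Np p \ B) : Set (SeqIn σ))

/-- `C` is a club in `[δ]^ω`. -/
def IsClubIn {δ : Type*} (C : Set (Set δ)) : Prop :=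
  (∀ σ ∈ C, σ.Countable) ∧
  (∀ a : Set δ, a.Countable → ∃ σ ∈ C, a ⊆ σ) ∧
  (∀ s : ℕ → Set δ, (∀ n, s n ∈ C) → Monotone s → (⋃ n, s n) ∈ C)


/-- `σ^ω` is homeomorphic to `ℕ → ↥σ`. -/
def seqInHomeo {κ : Type*} [TopologicalSpace κ] (σ : Set κ) :
    SeqIn σ ≃ₜ (ℕ → ↥σ) where
  toFun x n := ⟨x.1 n, x.2 n⟩
  invFun y := ⟨fun n => (y n).1, fun n => (y n).2⟩
  left_inv _ := rfl
  right_inv _ := rfl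
  continuous_toFun := continuous_pi fun n =>
    ((continuous_apply n).comp continuous_subtype_val).subtype_mk _
  continuous_invFun :=
    (continuous_pi fun n => continuous_subtype_val.comp (continuous_apply n)).subtype_mk _

theorem isOpen_iNpOpen {κ : Type*} [TopologicalSpace κ] [DiscreteTopology κ] (p : List κ) :
    IsOpen (Np p) := by
  have : Np p = ⋂ i : Fin p.length, (fun x : ℕ → κ => x i.1) ⁻¹' {p.get i} := by
    ext x; simp [Np]
  rw [this]
  exact isOpen_iInter_of_finite fun i =>
    (isOpen_discrete _).preimage (continuous_apply _)

theorem IsMeagre.union' {X : Type*} [TopologicalSpace X] {s t : Set X}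
    (hs : IsMeagre s) (ht : IsMeagre t) : IsMeagre (s ∪ t) := by
  rw [IsMeagre, compl_union]
  exact Filter.inter_mem hs ht

/-- Formalizable core of the meager/comeager reflection contradiction: a set `B ⊆ δ^ω`
cannot be simultaneously relatively meager below `p` (in `σ^ω`) for all `σ` in a
stationary set `T` of countable subsets of `δ` containing the entries of `p`, and
relatively comeager below `p` for all `σ` in a club `C` of countable subsets containing
the entries of `p`. -/
theorem stationary_meager_club_comeager_contradiction (δ : Type*) [Infinite δ]
    [TopologicalSpace δ] [DiscreteTopology δ] (B : Set (ℕ → δ)) (p : List δ)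
    (T C : Set (Set δ))
    (hstat : ∀ D : Set (Set δ), IsClubIn D → (T ∩ D).Nonempty)
    (hTp : ∀ σ ∈ T, ∀ a ∈ p, a ∈ σ)
    (hTm : ∀ σ ∈ T, MeagerBelowIn σ B p)
    (hclub : IsClubIn C)
    (hCp : ∀ σ ∈ C, ∀ a ∈ p, a ∈ σ)
    (hCc : ∀ σ ∈ C, ComeagerBelowIn σ B p) : False := by

  -- Fix a point of `δ` and shrink the club so its members are nonempty.
  obtain ⟨a0⟩ := (inferInstance : Nonempty δ)
  set D : Set (Set δ) := {σ ∈ C | a0 ∈ σ} with hD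
  have hDclub : IsClubIn D := by
    obtain ⟨h1, h2, h3⟩ := hclub
    refine ⟨fun σ hσ => h1 σ hσ.1, fun a ha => ?_, fun s hs hmono => ?_⟩
    · obtain ⟨σ, hσC, hσa⟩ := h2 (insert a0 a) (ha.insert a0)
      exact ⟨σ, ⟨hσC, hσa (mem_insert a0 a)⟩, fun x hx => hσa (mem_insert_of_mem _ hx)⟩
    · exact ⟨h3 s (fun n => (hs n).1) hmono, mem_iUnion.2 ⟨0, (hs 0).2⟩⟩
  obtain ⟨σ, hσT, hσC, hσa0⟩ := hstat D hDclub
  -- `σ` is countable and nonempty, so `σ^ω` is a Polish and hence Baire space.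
  have hσcount : σ.Countable := hclub.1 σ hσC
  haveI : Countable ↥σ := hσcount.to_subtype
  haveI : TopologicalSpace.IsCompletelyMetrizableSpace ↥σ := inferInstance
  haveI : TopologicalSpace.SeparableSpace ↥σ := inferInstance
  haveI : PolishSpace (SeqIn σ) := (seqInHomeo σ).isClosedEmbedding.polishSpace
  haveI : BaireSpace (SeqIn σ) := by
    letI := TopologicalSpace.upgradeIsCompletelyMetrizable (SeqIn σ)
    infer_instance
  -- The relative open set below `p` is meager.
  have hmeagre : IsMeagre (Subtype.val ⁻¹' Np p : Set (SeqIn σ)) := by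
    have := (hTm σ hσT).union' (hCc σ hσC)
    refine this.mono fun x hx => ?_
    by_cases hB : (x : ℕ → δ) ∈ B
    · exact Or.inl ⟨hB, hx⟩
    · exact Or.inr ⟨hx, hB⟩
  -- But it is open and nonempty, contradicting Baireness.
  have hopen : IsOpen (Subtype.val ⁻¹' Np p : Set (SeqIn σ)) := by
    refine ((isOpen_iNpOpen p).preimage continuous_subtype_val)
  have hne : (Subtype.val ⁻¹' Np p : Set (SeqIn σ)).Nonempty := by
    refine ⟨⟨fun n => if h : n < p.length then p.get ⟨n, h⟩ else a0, fun n => ?_⟩, fun i => ?_⟩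
    · dsimp only
      split
      · exact hTp σ hσT _ (p.get_mem _)
      · exact hσa0
    · simp [i.2]
  have hdense : Dense ((Subtype.val ⁻¹' Np p : Set (SeqIn σ))ᶜ) :=
    dense_of_mem_residual hmeagre
  obtain ⟨x, hx⟩ := hne
  obtain ⟨y, hy1, hy2⟩ := hdense.exists_mem_open hopen ⟨x, hx⟩
  exact hy1 hy2
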